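/- Let F and Q be n_x×n_x real matrices, and let P₀ be an n_x×n_x real matrix. Set P₀⁻ := F·P₀·Fᵀ + Q and suppose S₀ := H·P₀⁻·Hᵀ + R is invertible; set K₀ := P₀⁻·Hᵀ·S₀⁻¹. Then the one-step Kalman covariance recursion Φ(P) := (I − K(F·P·Fᵀ + Q)·H)·(F·P·Fᵀ + Q) is Fréchet differentiable at P₀, and its derivative is the linear map Δ ↦ (I − K₀·H) · F · Δ · Fᵀ · (I − Hᵀ·S₀⁻¹·H·P₀⁻). -/

import Mathlib

/-!
Write `Φ = U ∘ (P ↦ F P Fᵀ + Q)` with `U M = (1 - K(M) H) M = M - M G(M) M`, where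
`G M = Hᵀ S(M)⁻¹ H`. Since the derivative of inversion is `D ↦ -S⁻¹ D S⁻¹`, the derivative of `G`
is `D ↦ -G D G`, and the product rule gives
`dU(D) = D - D G M - M G D + M G D G M = (1 - M G) D (1 - G M)`.
The chain rule then inserts `D = F Δ Fᵀ`.
-/

open Matrix

attribute [local instance] Matrix.normedAddCommGroup Matrix.normedSpace

namespace Matrix

variable {𝕜 : Type*} [NontriviallyNormedField 𝕜] [CompleteSpace 𝕜]
variable {l m n p : Type*} [Fintype m] [Fintype n]

noncomputable def mulLeftRightCLM (A : Matrix l m 𝕜) (B : Matrix n p 𝕜) :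
    Matrix m n 𝕜 →L[𝕜] Matrix l p 𝕜 :=
  LinearMap.toContinuousLinearMap
    { toFun := fun X => A * X * B
      map_add' := fun X Y => by rw [Matrix.mul_add, Matrix.add_mul]
      map_smul' := fun c X => by rw [Matrix.mul_smul, Matrix.smul_mul, RingHom.id_apply] }

@[simp] theorem mulLeftRightCLM_apply (A : Matrix l m 𝕜) (B : Matrix n p 𝕜) (X : Matrix m n 𝕜) :
    mulLeftRightCLM A B X = A * X * B := rfl

variable [Fintype l] [Fintype p]

noncomputable def mulCLM : Matrix l m 𝕜 →L[𝕜] Matrix m n 𝕜 →L[𝕜] Matrix l n 𝕜 :=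
  (mulLinearMap 𝕜).toContinuousBilinearMap

theorem hasFDerivAt_mul_mul_add_const (A : Matrix l m 𝕜) (B : Matrix n p 𝕜) (C : Matrix l p 𝕜)
    (X₀ : Matrix m n 𝕜) :
    HasFDerivAt (fun X => A * X * B + C) (mulLeftRightCLM A B) X₀ :=
  (mulLeftRightCLM A B).hasFDerivAt.add_const C

/- The `L∞`-operator norm makes square matrices a complete normed algebra, and its topology is
definitionally the one of the sup norm, so the derivative of `Ring.inverse` transfers. -/
theorem hasFDerivAt_inv [DecidableEq m] {A : Matrix m m 𝕜} (hA : IsUnit A) :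
    HasFDerivAt (fun X : Matrix m m 𝕜 => X⁻¹) (-mulLeftRightCLM A⁻¹ A⁻¹) A := by
  let normedRing := Matrix.linftyOpNormedRing (n := m) (α := 𝕜)
  let := Matrix.linftyOpNormedAlgebra (n := m) (R := 𝕜) (α := 𝕜)
  have : @CompleteSpace (Matrix m m 𝕜) normedRing.toUniformSpace := FiniteDimensional.complete 𝕜 _
  obtain ⟨u, rfl⟩ := hA
  have hinv : (fun X : Matrix m m 𝕜 => X⁻¹) = Ring.inverse := funext nonsing_inv_eq_ringInverse
  have hL : mulLeftRightCLM (u : Matrix m m 𝕜)⁻¹ (u : Matrix m m 𝕜)⁻¹ =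
      ContinuousLinearMap.mulLeftRight 𝕜 (Matrix m m 𝕜) ↑u⁻¹ ↑u⁻¹ := by
    ext X : 1
    simp only [mulLeftRightCLM_apply, coe_units_inv]
    rfl
  rw [hinv, hL]
  exact hasFDerivAt_ringInverse u

variable {E : Type*} [NormedAddCommGroup E] [NormedSpace 𝕜 E]

theorem _root_.HasFDerivAt.matrix_mul {f : E → Matrix l m 𝕜} {g : E → Matrix m n 𝕜}
    {f' : E →L[𝕜] Matrix l m 𝕜} {g' : E →L[𝕜] Matrix m n 𝕜} {x : E}
    (hf : HasFDerivAt f f' x) (hg : HasFDerivAt g g' x) :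
    HasFDerivAt (fun y => f y * g y) (mulCLM.precompR E (f x) g' + mulCLM.precompL E f' (g x)) x :=
  mulCLM.hasFDerivAt_of_bilinear hf hg

theorem _root_.HasFDerivAt.matrix_inv [DecidableEq m] {f : E → Matrix m m 𝕜}
    {f' : E →L[𝕜] Matrix m m 𝕜} {x : E} (hf : HasFDerivAt f f' x) (hx : IsUnit (f x)) :
    HasFDerivAt (fun y => (f y)⁻¹) ((-mulLeftRightCLM (f x)⁻¹ (f x)⁻¹).comp f') x :=
  (hasFDerivAt_inv hx).comp x hf

end Matrix

section Kalman

variable {m n : Type*} [Fintype m] [Fintype n] [DecidableEq m]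

section CommRing

variable {α : Type*} [CommRing α]

def innovationCov (H : Matrix m n α) (R : Matrix m m α) (P : Matrix n n α) : Matrix m m α :=
  H * P * Hᵀ + R

noncomputable def kalmanGain (H : Matrix m n α) (R : Matrix m m α) (P : Matrix n n α) :
    Matrix n m α :=
  P * Hᵀ * (innovationCov H R P)⁻¹

noncomputable def kalmanUpdate [DecidableEq n] (H : Matrix m n α) (R : Matrix m m α)
    (P : Matrix n n α) : Matrix n n α :=
  (1 - kalmanGain H R P * H) * P

end CommRing

variable {𝕜 : Type*} [NontriviallyNormedField 𝕜] [CompleteSpace 𝕜]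

theorem hasFDerivAt_kalmanUpdate [DecidableEq n] {H : Matrix m n 𝕜} {R : Matrix m m 𝕜}
    {P : Matrix n n 𝕜} (hS : IsUnit (innovationCov H R P)) :
    HasFDerivAt (kalmanUpdate H R)
      (mulLeftRightCLM (1 - kalmanGain H R P * H) (1 - Hᵀ * (innovationCov H R P)⁻¹ * H * P)) P := by
  set S := innovationCov H R P
  set G : Matrix n n 𝕜 → Matrix n n 𝕜 := fun X => Hᵀ * (innovationCov H R X)⁻¹ * H with hG_def
  have hG : HasFDerivAt G (-mulLeftRightCLM (G P) (G P)) P := by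
    refine ((mulLeftRightCLM Hᵀ H).hasFDerivAt.comp P
      ((hasFDerivAt_mul_mul_add_const H Hᵀ R P).matrix_inv hS)).congr_fderiv
      (ContinuousLinearMap.ext fun D => ?_)
    -- `simp` cannot evaluate these maps: the calculus lemmas produce them over the sup-norm
    -- topology, `→L` elsewhere uses `Matrix`'s own topology, and the two agree only up to defeq.
    change Hᵀ * -(S⁻¹ * (H * D * Hᵀ) * S⁻¹) * H = -(Hᵀ * S⁻¹ * H * D * (Hᵀ * S⁻¹ * H))
    simp only [Matrix.mul_neg, Matrix.neg_mul, Matrix.mul_assoc]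
  have hU : kalmanUpdate H R = fun X => id X - id X * G X * id X := by
    funext X
    simp only [kalmanUpdate, kalmanGain, hG_def, id, Matrix.sub_mul, Matrix.one_mul,
      Matrix.mul_assoc]
  rw [hU]
  refine ((hasFDerivAt_id P).sub (((hasFDerivAt_id P).matrix_mul hG).matrix_mul
    (hasFDerivAt_id P))).congr_fderiv (ContinuousLinearMap.ext fun D => ?_)
  change D - (P * G P * D + (P * -(G P * D * G P) + D * G P) * P) =
    (1 - kalmanGain H R P * H) * D * (1 - Hᵀ * S⁻¹ * H * P)
  simp only [kalmanGain, hG_def, Matrix.mul_sub, Matrix.sub_mul, Matrix.mul_neg, Matrix.neg_mul,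
    Matrix.add_mul, Matrix.mul_one, Matrix.one_mul, Matrix.mul_assoc]
  abel

end Kalman

theorem stmt_3_general (n_x n_z : ℕ)
    (H : Matrix (Fin n_z) (Fin n_x) ℝ) (R : Matrix (Fin n_z) (Fin n_z) ℝ)
    (F Q P₀ : Matrix (Fin n_x) (Fin n_x) ℝ)
    (P₀m : Matrix (Fin n_x) (Fin n_x) ℝ) (hP₀m : P₀m = F * P₀ * Fᵀ + Q)
    (S₀ : Matrix (Fin n_z) (Fin n_z) ℝ) (hS₀ : S₀ = H * P₀m * Hᵀ + R)
    (hS : IsUnit S₀)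
    (K₀ : Matrix (Fin n_x) (Fin n_z) ℝ) (hK₀ : K₀ = P₀m * Hᵀ * S₀⁻¹) :
    ∃ L : Matrix (Fin n_x) (Fin n_x) ℝ →L[ℝ] Matrix (Fin n_x) (Fin n_x) ℝ,
      HasFDerivAt
        (fun P : Matrix (Fin n_x) (Fin n_x) ℝ =>
          (1 - (F * P * Fᵀ + Q) * Hᵀ * (H * (F * P * Fᵀ + Q) * Hᵀ + R)⁻¹ * H) *
            (F * P * Fᵀ + Q)) L P₀ ∧
      ∀ Δ : Matrix (Fin n_x) (Fin n_x) ℝ,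
        L Δ = (1 - K₀ * H) * F * Δ * Fᵀ * (1 - Hᵀ * S₀⁻¹ * H * P₀m) := by
  subst hP₀m hS₀ hK₀
  have hΦ := (hasFDerivAt_kalmanUpdate (H := H) (R := R) (P := F * P₀ * Fᵀ + Q) hS).comp P₀
    (hasFDerivAt_mul_mul_add_const F Fᵀ Q P₀)
  refine ⟨_, hΦ, fun Δ => ?_⟩
  change mulLeftRightCLM _ _ (mulLeftRightCLM F Fᵀ Δ) = _
  simp only [mulLeftRightCLM_apply, kalmanGain, innovationCov, Matrix.mul_assoc]

/-- With `P₀⁻ = F·P₀·Fᵀ + Q` and `S₀ = H·P₀⁻·Hᵀ + R` invertible,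
`K₀ = P₀⁻·Hᵀ·S₀⁻¹`, the one-step Kalman covariance recursion
`Φ(P) = (I − K(F·P·Fᵀ + Q)·H)·(F·P·Fᵀ + Q)` is Fréchet differentiable at `P₀` with
derivative `Δ ↦ (I − K₀·H)·F·Δ·Fᵀ·(I − Hᵀ·S₀⁻¹·H·P₀⁻)`. -/
theorem stmt_3 (n_x n_z : ℕ) (hnx : 0 < n_x) (hnz : 0 < n_z)
    (H : Matrix (Fin n_z) (Fin n_x) ℝ) (R : Matrix (Fin n_z) (Fin n_z) ℝ)
    (F Q P₀ : Matrix (Fin n_x) (Fin n_x) ℝ)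
    (P₀m : Matrix (Fin n_x) (Fin n_x) ℝ) (hP₀m : P₀m = F * P₀ * Fᵀ + Q)
    (S₀ : Matrix (Fin n_z) (Fin n_z) ℝ) (hS₀ : S₀ = H * P₀m * Hᵀ + R)
    (hS : IsUnit S₀)
    (K₀ : Matrix (Fin n_x) (Fin n_z) ℝ) (hK₀ : K₀ = P₀m * Hᵀ * S₀⁻¹) :
    ∃ L : Matrix (Fin n_x) (Fin n_x) ℝ →L[ℝ] Matrix (Fin n_x) (Fin n_x) ℝ,
      HasFDerivAt
        (fun P : Matrix (Fin n_x) (Fin n_x) ℝ =>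
          (1 - (F * P * Fᵀ + Q) * Hᵀ * (H * (F * P * Fᵀ + Q) * Hᵀ + R)⁻¹ * H) *
            (F * P * Fᵀ + Q)) L P₀ ∧
      ∀ Δ : Matrix (Fin n_x) (Fin n_x) ℝ,
        L Δ = (1 - K₀ * H) * F * Δ * Fᵀ * (1 - Hᵀ * S₀⁻¹ * H * P₀m) :=
  stmt_3_general n_x n_z H R F Q P₀ P₀m hP₀m S₀ hS₀ hS K₀ hK₀
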